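/- arXiv:2506.09051 — 3 statements merged into one kernel-verified Lean document; each statement's English description precedes it below -/
import Mathlib

section
/- Let I = ⟨u_1,...,u_r⟩ be a complete intersection monomial ideal in S, P = ⟨y_1,...,y_r⟩ an associated prime with y_i ∈ supp(u_i), and g = (∏ u_i)/(∏ y_i). If m is a monomial with (I^n : m) = P, then g divides m and deg(m/g) ≥ (n−1)·α(I), where α(I) is the minimal degree of a generator of I. -/
/-!
Write `k_i(b)` for the largest `t` with `t • e_i ≤ b`, and `δ_s` for the exponent of `x_s`. Since
the `e_i` have disjoint supports, `x^b ∈ I^n` exactly when `n ≤ ∑ k_i(b)`. The hypothesis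
`(I^n : x^a) = P` says that `x^a ∉ I^n` while `x_{y_l} x^a ∈ I^n` for every `l`. Multiplying by
`x_{y_l}` raises only `k_l`, and by at most one, so `∑ k_i(a) = n - 1` and
`(k_l(a) + 1) • e_l ≤ a + δ_{y_l}`. On the support of `e_l` this reads
`a ≥ k_l(a) • e_l + (e_l - δ_{y_l})`, hence `g + ∑ k_l(a) • e_l ≤ a`, which gives `g ≤ a` and
`deg(a - g) ≥ ∑ k_l(a) deg(e_l) ≥ (n - 1) α(I)`.
-/

open MvPolynomial Ideal

namespace MvPolynomial

variable {R σ ι : Type*} [CommSemiring R]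

theorem span_range_monomial_pow (e : ι → σ →₀ ℕ) (n : ℕ) :
    span (Set.range fun i => monomial (e i) (1 : R)) ^ n =
      span ((monomial · 1) '' ((fun c : ι →₀ ℕ => c.sum fun i k => k • e i) ''
        {c | c.degree = n})) := by
  rw [Ideal.span, Submodule.span_pow, ← Set.image_univ, Finsupp.image_pow_eq_finsuppProd_image]
  congr 1
  ext p
  simp [Set.image_image, monomial_finsupp_sum_index, monomial_pow]

theorem monomial_mem_span_range_monomial_pow_iff [Nontrivial R] (e : ι → σ →₀ ℕ) (n : ℕ)
    (b : σ →₀ ℕ) :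
    monomial b (1 : R) ∈ span (Set.range fun i => monomial (e i) (1 : R)) ^ n ↔
      ∃ c : ι →₀ ℕ, c.degree = n ∧ (c.sum fun i k => k • e i) ≤ b := by
  classical
  simp [span_range_monomial_pow, mem_ideal_span_monomial_image, support_monomial]

end MvPolynomial

namespace Finsupp

open Function

variable {σ ι : Type*}

/-- The largest `t` with `t • e ≤ b` when `e ≠ 0` (junk value `0` when `e = 0`). -/
noncomputable def nsmulMultiplicity (e b : σ →₀ ℕ) : ℕ := ⨅ s : e.support, b s / e s

theorem nsmulMultiplicity_nsmul_le (e b : σ →₀ ℕ) : nsmulMultiplicity e b • e ≤ b := by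
  intro s
  by_cases hs : s ∈ e.support
  · calc nsmulMultiplicity e b * e s ≤ b s / e s * e s :=
          Nat.mul_le_mul_right _ (ciInf_le (OrderBot.bddBelow _) (⟨s, hs⟩ : e.support))
      _ ≤ b s := Nat.div_mul_le_self _ _
  · simp [notMem_support_iff.1 hs]

theorem nsmul_le_iff_le_nsmulMultiplicity {e : σ →₀ ℕ} (he : e ≠ 0) {b : σ →₀ ℕ} {t : ℕ} :
    t • e ≤ b ↔ t ≤ nsmulMultiplicity e b := by
  refine ⟨fun h => ?_, fun h => (nsmul_le_nsmul_left bot_le h).trans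
    (nsmulMultiplicity_nsmul_le e b)⟩
  have : Nonempty e.support := (support_nonempty_iff.2 he).to_subtype
  exact le_ciInf fun ⟨s, hs⟩ =>
    (Nat.le_div_iff_mul_le (Nat.pos_of_ne_zero (mem_support_iff.1 hs))).2 (h s)

theorem nsmulMultiplicity_add_le {e : σ →₀ ℕ} (he : e ≠ 0) {d : σ →₀ ℕ} (hd : d ≤ e)
    (b : σ →₀ ℕ) : nsmulMultiplicity e (d + b) ≤ nsmulMultiplicity e b + 1 := by
  rcases ht : nsmulMultiplicity e (d + b) with _ | t
  · omega
  · have key := nsmulMultiplicity_nsmul_le e (d + b)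
    rw [ht, succ_nsmul] at key
    rw [Nat.succ_le_succ_iff, ← nsmul_le_iff_le_nsmulMultiplicity he]
    exact le_of_add_le_add_right (key.trans ((add_le_add_left hd b).trans_eq (add_comm e b)))

theorem nsmulMultiplicity_single_add_of_notMem {e : σ →₀ ℕ} {s : σ} (hs : s ∉ e.support)
    (b : σ →₀ ℕ) : nsmulMultiplicity e (single s 1 + b) = nsmulMultiplicity e b :=
  iInf_congr fun t => by
    have : s ≠ t := fun h => hs (h ▸ t.2)
    simp [this]

theorem sum_le_iff_of_pairwise_disjoint {f : ι → σ →₀ ℕ}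
    (hf : Pairwise (Disjoint on fun i => (f i).support)) (s : Finset ι) (b : σ →₀ ℕ) :
    ∑ i ∈ s, f i ≤ b ↔ ∀ i ∈ s, f i ≤ b := by
  refine ⟨fun h i hi => (Finset.single_le_sum (fun _ _ => zero_le) hi).trans h, fun h x => ?_⟩
  rw [coe_finsetSum, Finset.sum_apply]
  by_cases hx : ∃ i ∈ s, x ∈ (f i).support
  · obtain ⟨i, hi, hxi⟩ := hx
    rw [Finset.sum_eq_single_of_mem i hi fun j _ hji =>
      notMem_support_iff.1 (Finset.disjoint_right.1 (hf hji) hxi)]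
    exact h i hi x
  · push Not at hx
    rw [Finset.sum_eq_zero fun i hi => notMem_support_iff.1 (hx i hi)]
    exact zero_le

end Finsupp

section CompleteIntersection

open Finsupp Function

variable {σ ι : Type*}

theorem monomial_mem_pow_iff_le_sum_nsmulMultiplicity [Fintype ι] {R : Type*} [CommSemiring R]
    [Nontrivial R] {e : ι → σ →₀ ℕ} (he : ∀ i, e i ≠ 0)
    (hdisj : Pairwise (Disjoint on fun i => (e i).support)) (n : ℕ) (b : σ →₀ ℕ) :
    monomial b (1 : R) ∈ span (Set.range fun i => monomial (e i) (1 : R)) ^ n ↔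
      n ≤ ∑ i, nsmulMultiplicity (e i) b := by
  rw [monomial_mem_span_range_monomial_pow_iff]
  have hdisj_smul (c : ι →₀ ℕ) : Pairwise (Disjoint on fun i => (c i • e i).support) :=
    fun i j hij => (hdisj hij).mono support_smul support_smul
  constructor
  · rintro ⟨c, rfl, hc⟩
    rw [degree_eq_sum]
    refine Finset.sum_le_sum fun i _ => (nsmul_le_iff_le_nsmulMultiplicity (he i)).1 ?_
    by_cases hi : i ∈ c.support
    · exact (sum_le_iff_of_pairwise_disjoint (hdisj_smul c) c.support b).1 hc i hi
    · simp [notMem_support_iff.1 hi]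
  · intro h
    obtain ⟨c, hc, rfl⟩ := exists_le_degree_eq
      (equivFunOnFinite.symm fun i => nsmulMultiplicity (e i) b) n (by rwa [degree_eq_sum])
    refine ⟨c, rfl, (sum_le_iff_of_pairwise_disjoint (hdisj_smul c) c.support b).2 fun i _ => ?_⟩
    exact (nsmul_le_iff_le_nsmulMultiplicity (he i)).2 (hc i)

theorem nsmulMultiplicity_single_add_le [DecidableEq ι] {e : ι → σ →₀ ℕ} (he : ∀ i, e i ≠ 0)
    (hdisj : Pairwise (Disjoint on fun i => (e i).support)) {y : ι → σ}
    (hy : ∀ i, y i ∈ (e i).support) (a : σ →₀ ℕ) (l j : ι) :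
    nsmulMultiplicity (e j) (single (y l) 1 + a) ≤
      nsmulMultiplicity (e j) a + if j = l then 1 else 0 := by
  split_ifs with hjl
  · subst hjl
    exact nsmulMultiplicity_add_le (he j) (single_le_iff.2 (Nat.one_le_iff_ne_zero.2
      (mem_support_iff.1 (hy j)))) a
  · rw [add_zero, nsmulMultiplicity_single_add_of_notMem]
    exact Finset.disjoint_right.1 (hdisj hjl) (hy l)

theorem sum_nsmulMultiplicity_single_add_le [Fintype ι] {e : ι → σ →₀ ℕ} (he : ∀ i, e i ≠ 0)
    (hdisj : Pairwise (Disjoint on fun i => (e i).support)) {y : ι → σ}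
    (hy : ∀ i, y i ∈ (e i).support) (a : σ →₀ ℕ) (l : ι) :
    ∑ j, nsmulMultiplicity (e j) (single (y l) 1 + a) ≤ ∑ j, nsmulMultiplicity (e j) a + 1 := by
  classical
  calc _ ≤ ∑ j, (nsmulMultiplicity (e j) a + if j = l then 1 else 0) :=
        Finset.sum_le_sum fun j _ => nsmulMultiplicity_single_add_le he hdisj hy a l j
    _ = _ := by simp [Finset.sum_add_distrib]

theorem succ_nsmul_le_single_add_of_sum_lt [Fintype ι] {e : ι → σ →₀ ℕ} (he : ∀ i, e i ≠ 0)
    (hdisj : Pairwise (Disjoint on fun i => (e i).support)) {y : ι → σ}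
    (hy : ∀ i, y i ∈ (e i).support) {a : σ →₀ ℕ} {l : ι}
    (h : ∑ j, nsmulMultiplicity (e j) a < ∑ j, nsmulMultiplicity (e j) (single (y l) 1 + a)) :
    (nsmulMultiplicity (e l) a + 1) • e l ≤ single (y l) 1 + a := by
  classical
  have hle := nsmulMultiplicity_single_add_le he hdisj hy a l
  have heq : ∑ j, nsmulMultiplicity (e j) (single (y l) 1 + a) =
      ∑ j, (nsmulMultiplicity (e j) a + if j = l then 1 else 0) := by
    refine le_antisymm (Finset.sum_le_sum fun j _ => hle j) ?_
    simp only [Finset.sum_add_distrib, Finset.sum_ite_eq', Finset.mem_univ, if_true]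
    omega
  have := (Finset.sum_eq_sum_iff_of_le fun j _ => hle j).1 heq l (Finset.mem_univ l)
  rw [if_pos rfl] at this
  rw [nsmul_le_iff_le_nsmulMultiplicity (he l), this]

theorem sum_tsub_single_add_sum_nsmul_le [Fintype ι] {e : ι → σ →₀ ℕ}
    (hdisj : Pairwise (Disjoint on fun i => (e i).support)) {y : ι → σ}
    (hy : ∀ i, y i ∈ (e i).support) {k : ι → ℕ} {a : σ →₀ ℕ}
    (h : ∀ l, (k l + 1) • e l ≤ single (y l) 1 + a) :
    ∑ l, (e l - single (y l) 1) + ∑ l, k l • e l ≤ a := by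
  classical
  have hsupp (l : ι) : (e l - single (y l) 1 + k l • e l).support ⊆ (e l).support :=
    Finsupp.support_add.trans (Finset.union_subset support_tsub Finsupp.support_smul)
  rw [← Finset.sum_add_distrib,
    sum_le_iff_of_pairwise_disjoint (fun i j hij => (hdisj hij).mono (hsupp i) (hsupp j))]
  intro l _
  have hδ : single (y l) 1 ≤ e l :=
    single_le_iff.2 (Nat.one_le_iff_ne_zero.2 (mem_support_iff.1 (hy l)))
  rw [tsub_add_eq_add_tsub hδ, tsub_le_iff_left, ← succ_nsmul']
  exact h l

end CompleteIntersection

theorem dvd_and_deg_bound_of_colon_pow_eq_assPrime_general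
    {K : Type*} [Field K] {σ : Type*} (r : ℕ) (hr : 0 < r) (e : Fin r → (σ →₀ ℕ))
    (he : ∀ l, e l ≠ 0)
    (hdisj : ∀ l l', l ≠ l' → Disjoint (e l).support (e l').support)
    (u : Fin r → MvPolynomial σ K) (hu : ∀ l, u l = monomial (e l) 1)
    (I : Ideal (MvPolynomial σ K)) (hI : I = Ideal.span (Set.range u))
    (y : Fin r → σ) (hy : ∀ l, y l ∈ (e l).support)
    (P : Ideal (MvPolynomial σ K))
    (hP : P = Ideal.span (Set.range fun l => (X (y l) : MvPolynomial σ K)))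
    (hPass : P ∈ associatedPrimes (MvPolynomial σ K) (MvPolynomial σ K ⧸ I))
    (g : σ →₀ ℕ) (hg : g = ∑ l, (e l - Finsupp.single (y l) 1))
    (n : ℕ) (a : σ →₀ ℕ)
    (ha : Submodule.colon (I ^ n) (Ideal.span {(monomial a 1 : MvPolynomial σ K)}) = P) :
    g ≤ a ∧
    (n - 1) * (Finset.univ.inf' ⟨⟨0, hr⟩, Finset.mem_univ _⟩
        (fun l => (e l).sum fun _ k => k)) ≤ ((a - g).sum fun _ k => k) := by
  obtain rfl : u = fun l => monomial (e l) 1 := funext hu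
  subst hI hP hg
  have hmem := monomial_mem_pow_iff_le_sum_nsmulMultiplicity (R := K) he hdisj n
  set k := fun l => Finsupp.nsmulMultiplicity (e l) a
  have hlt : ∑ l, k l < n := by
    rw [← not_le, ← hmem]
    intro h
    refine hPass.isPrime.ne_top ((eq_top_iff_one _).2 ?_)
    rwa [← ha, mem_colon_span_singleton, one_mul]
  have hX (l : Fin r) : n ≤ ∑ j, Finsupp.nsmulMultiplicity (e j) (Finsupp.single (y l) 1 + a) := by
    rw [← hmem, monomial_single_add, pow_one, ← mem_colon_span_singleton, ha]
    exact subset_span ⟨l, rfl⟩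
  have hsum : n - 1 ≤ ∑ l, k l := by
    have h0 : ∑ j, Finsupp.nsmulMultiplicity (e j) (Finsupp.single (y ⟨0, hr⟩) 1 + a) ≤
        ∑ l, k l + 1 := sum_nsmulMultiplicity_single_add_le he hdisj hy a ⟨0, hr⟩
    have := hX ⟨0, hr⟩
    omega
  have hfit := sum_tsub_single_add_sum_nsmul_le hdisj hy fun l =>
    succ_nsmul_le_single_add_of_sum_lt he hdisj hy (hlt.trans_le (hX l))
  refine ⟨le_self_add.trans hfit, ?_⟩
  calc (n - 1) * Finset.univ.inf' _ (fun l => (e l).degree) ≤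
        (∑ l, k l) * Finset.univ.inf' _ (fun l => (e l).degree) := Nat.mul_le_mul_right _ hsum
    _ = ∑ l, k l * Finset.univ.inf' _ (fun l => (e l).degree) := Finset.sum_mul _ _ _
    _ ≤ ∑ l, k l * (e l).degree :=
        Finset.sum_le_sum fun l _ => Nat.mul_le_mul_left _ (Finset.inf'_le _ (Finset.mem_univ l))
    _ = (∑ l, k l • e l).degree := by simp [map_sum]
    _ ≤ _ := Finsupp.degree_mono (le_tsub_of_add_le_left hfit)

/-- For a complete intersection monomial ideal `I = ⟨u_1,…,u_r⟩` with associated prime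
`P = ⟨y_1,…,y_r⟩`, `y l ∈ supp(u l)`, and `g = (∏ u_i)/(∏ y_i)`: if `m = x^a` is a monomial
with `(I^n : m) = P` then `g ∣ m` and `deg(m/g) ≥ (n−1)·α(I)`. -/
theorem dvd_and_deg_bound_of_colon_pow_eq_assPrime
    {K : Type*} [Field K] {σ : Type*} (r : ℕ) (hr : 0 < r) (e : Fin r → (σ →₀ ℕ))
    (he : ∀ l, e l ≠ 0)
    (hdisj : ∀ l l', l ≠ l' → Disjoint (e l).support (e l').support)
    (u : Fin r → MvPolynomial σ K) (hu : ∀ l, u l = monomial (e l) 1)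
    (I : Ideal (MvPolynomial σ K)) (hI : I = Ideal.span (Set.range u))
    (y : Fin r → σ) (hy : ∀ l, y l ∈ (e l).support)
    (P : Ideal (MvPolynomial σ K))
    (hP : P = Ideal.span (Set.range fun l => (X (y l) : MvPolynomial σ K)))
    (hPass : P ∈ associatedPrimes (MvPolynomial σ K) (MvPolynomial σ K ⧸ I))
    (g : σ →₀ ℕ) (hg : g = ∑ l, (e l - Finsupp.single (y l) 1))
    (n : ℕ) (hn : 1 ≤ n) (a : σ →₀ ℕ)
    (ha : Submodule.colon (I ^ n) (Ideal.span {(monomial a 1 : MvPolynomial σ K)}) = P) :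
    g ≤ a ∧
    (n - 1) * (Finset.univ.inf' ⟨⟨0, hr⟩, Finset.mem_univ _⟩
        (fun l => (e l).sum fun _ k => k)) ≤ ((a - g).sum fun _ k => k) :=
  dvd_and_deg_bound_of_colon_pow_eq_assPrime_general r hr e he hdisj u hu I hI y hy P hP hPass g hg
    n a ha
end

section
/- Let I = ⟨x_{i_1}^{a_1},...,x_{i_k}^{a_k}⟩ with 1 ≤ a_1 ≤ ... ≤ a_k, k ≥ 2, and suppose there exists j ≥ 2 with a_1 = ... = a_{j-1} ≤ a_j = ... = a_k. Then for all n ≥ 1, v(\overline{I^n}) = n·a_1 + ⌈a_k/a_1⌉ − 2. -/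
open MvPolynomial Ideal

/-- The integral closure of an ideal. -/
noncomputable def intClosure {R : Type*} [CommRing R] (I : Ideal R) : Ideal R :=
  Ideal.span {x : R | ∃ n : ℕ, 0 < n ∧ ∃ c : ℕ → R,
    (∀ i ∈ Finset.Icc 1 n, c i ∈ I ^ i) ∧
    x ^ n + ∑ i ∈ Finset.Icc 1 n, c i * x ^ (n - i) = 0}

/-- The v-number of a homogeneous ideal `J`. -/
noncomputable def vnumber {K : Type*} [Field K] {σ : Type*}
    (J : Ideal (MvPolynomial σ K)) : ℕ :=
  sInf {d : ℕ | ∃ f : MvPolynomial σ K, f.IsHomogeneous d ∧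
    Submodule.colon J (Ideal.span {f}) ∈
      associatedPrimes (MvPolynomial σ K) (MvPolynomial σ K ⧸ J)}

/-!
Give `x_{i_l}` the weight `A / a_l` (here `A = a₀ aₖ`) and every other variable weight `0`. The
integral closure of `I ^ n` is the monomial ideal `W_{nA}` of polynomials whose monomials all
have weight `≥ n A`: a monomial `x ^ b` of weight `≥ n A` has `(x ^ b) ^ A ∈ (I ^ n) ^ A`, and
conversely `x_s ↦ x_s t ^ {w s}` maps `I` into `(t ^ A)`, an integrally closed ideal of a
polynomial ring over a domain. Since `t` is prime, `W_D` is primary to the prime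
`W_1 = (x_{i_1}, …, x_{i_k})`, so the v-number is the least degree of a homogeneous `f` with
`(W_D : f) = W_1`. Such an `f` has a monomial whose weight lies in `[D - a₀, D)`, which forces
degree `≥ n a₀ + ⌈aₖ / a₀⌉ - 2`, and `x_{i_1} ^ (n a₀ - 1) * x_{i_k} ^ (⌈aₖ / a₀⌉ - 1)` attains it.
-/

section IntClosure

variable {R S : Type*} [CommRing R] [CommRing S]

lemma intClosure_mono {I J : Ideal R} (h : I ≤ J) : intClosure I ≤ intClosure J := by
  refine Ideal.span_mono ?_
  rintro x ⟨N, hN, c, hc, hx⟩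
  exact ⟨N, hN, c, fun k hk => Ideal.pow_right_mono h k (hc k hk), hx⟩

lemma intClosure_le_comap_intClosure_map (f : R →+* S) (I : Ideal R) :
    intClosure I ≤ (intClosure (I.map f)).comap f := by
  refine Ideal.span_le.2 ?_
  rintro x ⟨N, hN, c, hc, hx⟩
  refine Ideal.subset_span ⟨N, hN, f ∘ c, fun k hk => ?_, ?_⟩
  · rw [Function.comp_apply, ← Ideal.map_pow]
    exact Ideal.mem_map_of_mem f (hc k hk)
  · simpa using congrArg f hx

lemma mem_intClosure_of_pow_mem {I : Ideal R} {x : R} {N : ℕ} (hN : 0 < N)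
    (hx : x ^ N ∈ I ^ N) : x ∈ intClosure I := by
  classical
  refine Ideal.subset_span ⟨N, hN, fun k => if k = N then -x ^ N else 0, fun k _ => ?_, ?_⟩
  · dsimp only
    split_ifs with h
    · subst h
      exact neg_mem hx
    · exact zero_mem _
  · simp [show 1 ≤ N from hN]

/-- If `π ^ D ∤ p`, every term of the equation other than `p ^ N` has larger `π`-adic order
than `p ^ N`. -/
theorem Prime.pow_dvd_of_integral_equation [IsDomain R] {π p : R} (hπ : Prime π)
    (hp : FiniteMultiplicity π p) {D N : ℕ} {c : ℕ → R} (hN : 0 < N)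
    (hc : ∀ k ∈ Finset.Icc 1 N, π ^ (D * k) ∣ c k)
    (heq : p ^ N + ∑ k ∈ Finset.Icc 1 N, c k * p ^ (N - k) = 0) : π ^ D ∣ p := by
  obtain ⟨q, hpq, hq⟩ := hp.exists_eq_pow_mul_and_not_dvd
  generalize multiplicity π p = m at hpq
  subst hpq
  by_contra hD
  have hmD : m < D := lt_of_not_ge fun h => hD (dvd_mul_of_dvd_left (pow_dvd_pow π h) q)
  have hsum : π ^ (m * N + 1) ∣ ∑ k ∈ Finset.Icc 1 N, c k * (π ^ m * q) ^ (N - k) := by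
    refine Finset.dvd_sum fun k hk => ?_
    obtain ⟨hk1, hkN⟩ := Finset.mem_Icc.1 hk
    obtain ⟨r, rfl⟩ := Nat.exists_eq_add_of_le hkN
    have hexp : m * (k + r) + 1 ≤ D * k + m * r := by nlinarith
    refine (pow_dvd_pow π hexp).trans ?_
    rw [pow_add, Nat.add_sub_cancel_left, mul_pow, ← pow_mul]
    exact mul_dvd_mul (hc _ hk) (dvd_mul_right _ _)
  have hpow : π ^ (m * N) * π ∣ π ^ (m * N) * q ^ N := by
    rw [← pow_succ, pow_mul, ← mul_pow, eq_neg_of_add_eq_zero_left heq, dvd_neg]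
    exact hsum
  exact hq (hπ.dvd_of_dvd_pow ((mul_dvd_mul_iff_left (pow_ne_zero _ hπ.ne_zero)).1 hpow))

theorem Polynomial.intClosure_span_X_pow_le [IsDomain R] (D : ℕ) :
    intClosure (Ideal.span {(Polynomial.X : Polynomial R) ^ D}) ≤
      Ideal.span {Polynomial.X ^ D} := by
  refine Ideal.span_le.2 ?_
  rintro p ⟨N, hN, c, hc, heq⟩
  by_cases hp : p = 0
  · simp [hp]
  have hfin : FiniteMultiplicity Polynomial.X p := by
    simpa using Polynomial.finiteMultiplicity_X_sub_C (0 : R) hp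
  refine Ideal.mem_span_singleton.2 (prime_X.pow_dvd_of_integral_equation hfin hN ?_ heq)
  intro k hk
  rw [← Ideal.mem_span_singleton, pow_mul, ← Ideal.span_singleton_pow]
  exact hc k hk

end IntClosure

section WeightIdeal

open Finsupp (weight weight_apply)

variable {R σ : Type*} [CommRing R] (w : σ → ℕ)

/-- `X s ↦ X s * t ^ w s`: the `t`-adic order of the image of `f` is the least `w`-weight of a
monomial of `f`. -/
noncomputable def weightedLift : MvPolynomial σ R →+* Polynomial (MvPolynomial σ R) :=
  eval₂Hom (Polynomial.C.comp C) fun s => Polynomial.C (X s) * Polynomial.X ^ w s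

lemma weightedLift_monomial (b : σ →₀ ℕ) (c : R) :
    weightedLift w (monomial b c) = Polynomial.C (monomial b c) * Polynomial.X ^ weight w b := by
  rw [weightedLift, eval₂Hom_monomial, RingHom.comp_apply, monomial_eq, Polynomial.C_mul,
    mul_assoc, Finsupp.prod, Finsupp.prod]
  congr 1
  simp only [mul_pow, Finset.prod_mul_distrib, ← pow_mul, Finset.prod_pow_eq_pow_sum, map_prod,
    Polynomial.C_pow, weight_apply, Finsupp.sum, smul_eq_mul, mul_comm]

lemma coeff_weightedLift (f : MvPolynomial σ R) (d : ℕ) :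
    (weightedLift w f).coeff d = weightedHomogeneousComponent w d f := by
  classical
  induction f using MvPolynomial.induction_on' with
  | monomial b c =>
    ext b'
    rw [weightedLift_monomial, Polynomial.coeff_C_mul_X_pow, coeff_weightedHomogeneousComponent]
    rcases eq_or_ne b b' with rfl | hb
    · by_cases h : d = weight w b <;> simp [h, eq_comm]
    · split_ifs <;> simp [coeff_monomial, hb]
  | add f g hf hg => rw [map_add, Polynomial.coeff_add, hf, hg, map_add]

lemma X_pow_dvd_weightedLift_iff (f : MvPolynomial σ R) (D : ℕ) :
    Polynomial.X ^ D ∣ weightedLift w f ↔ ∀ b ∈ f.support, D ≤ weight w b := by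
  classical
  simp_rw [Polynomial.X_pow_dvd_iff, coeff_weightedLift, MvPolynomial.ext_iff,
    coeff_weightedHomogeneousComponent, coeff_zero, mem_support_iff]
  constructor
  · intro h b hb
    by_contra hlt
    simpa [hb] using h _ (not_le.1 hlt) b
  · intro h d hd b
    split_ifs with hbd
    · by_contra hb
      exact absurd (h b hb) (by omega)
    · rfl

noncomputable def weightIdeal (D : ℕ) : Ideal (MvPolynomial σ R) :=
  Ideal.span ((fun b => monomial b 1) '' {b | D ≤ weight w b})

variable {w}

lemma mem_weightIdeal_iff {D : ℕ} {f : MvPolynomial σ R} :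
    f ∈ weightIdeal w D ↔ ∀ b ∈ f.support, D ≤ weight w b := by
  rw [weightIdeal, mem_ideal_span_monomial_image]
  refine forall₂_congr fun b _ => ⟨?_, fun h => ⟨b, h, le_rfl⟩⟩
  rintro ⟨b', hb', hle⟩
  obtain ⟨c, rfl⟩ := exists_add_of_le hle
  exact hb'.trans (by simp)

lemma weightIdeal_eq_comap (D : ℕ) :
    weightIdeal w D = (Ideal.span {Polynomial.X ^ D}).comap (weightedLift (R := R) w) := by
  ext f
  rw [Ideal.mem_comap, Ideal.mem_span_singleton, X_pow_dvd_weightedLift_iff, mem_weightIdeal_iff]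

lemma weightIdeal_pow_le (D n : ℕ) : weightIdeal (R := R) w D ^ n ≤ weightIdeal w (n * D) := by
  rw [weightIdeal_eq_comap, weightIdeal_eq_comap]
  refine (Ideal.le_comap_pow _ n).trans (Ideal.comap_mono ?_)
  rw [Ideal.span_singleton_pow, ← pow_mul, mul_comm]

lemma intClosure_weightIdeal_le [IsDomain R] (D : ℕ) :
    intClosure (weightIdeal (R := R) w D) ≤ weightIdeal w D := by
  rw [weightIdeal_eq_comap]
  calc _ ≤ (intClosure ((Ideal.span {Polynomial.X ^ D}).comap (weightedLift w) |>.map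
          (weightedLift w))).comap (weightedLift w) :=
        intClosure_le_comap_intClosure_map _ _
    _ ≤ (intClosure (Ideal.span {Polynomial.X ^ D})).comap (weightedLift w) :=
        Ideal.comap_mono (intClosure_mono Ideal.map_comap_le)
    _ ≤ _ := Ideal.comap_mono (Polynomial.intClosure_span_X_pow_le D)

lemma weightIdeal_one_isPrime [IsDomain R] : (weightIdeal (R := R) w 1).IsPrime := by
  rw [weightIdeal_eq_comap, pow_one]
  have := (Ideal.span_singleton_prime Polynomial.X_ne_zero).2
    (Polynomial.prime_X (R := MvPolynomial σ R))
  exact Ideal.comap_isPrime _ _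

/-- `weightIdeal w D` is `weightIdeal w 1`-primary. -/
lemma mem_weightIdeal_of_mul_mem [IsDomain R] {D : ℕ} {f g : MvPolynomial σ R}
    (hf : f ∉ weightIdeal w 1) (hfg : f * g ∈ weightIdeal w D) : g ∈ weightIdeal w D := by
  rw [weightIdeal_eq_comap, Ideal.mem_comap, Ideal.mem_span_singleton] at *
  rw [map_mul] at hfg
  exact Polynomial.prime_X.pow_dvd_of_dvd_mul_left D (by simpa using hf) hfg

lemma weightIdeal_one_le_radical (D : ℕ) :
    weightIdeal (R := R) w 1 ≤ (weightIdeal w D).radical := fun f hf =>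
  ⟨D, by simpa using weightIdeal_pow_le 1 D (Ideal.pow_mem_pow hf D)⟩

lemma exists_mem_support_of_X_mul_mem {D : ℕ} {f : MvPolynomial σ R} {s : σ}
    (hf : f ∉ weightIdeal w D) (hXf : X s * f ∈ weightIdeal w D) :
    ∃ b ∈ f.support, weight w b < D ∧ D ≤ weight w b + w s := by
  rw [mem_weightIdeal_iff] at hf hXf
  push Not at hf
  obtain ⟨b, hb, hlt⟩ := hf
  refine ⟨b, hb, hlt, ?_⟩
  have := hXf (Finsupp.single s 1 + b) <| by
    rw [support_X_mul]
    exact Finset.mem_map.2 ⟨b, hb, rfl⟩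
  rwa [map_add, Finsupp.weight_single, one_smul, add_comm] at this

lemma colon_le_weightIdeal_one [IsDomain R] {D : ℕ} {g : MvPolynomial σ R}
    (hg : g ∉ weightIdeal w D) :
    Submodule.colon (weightIdeal (R := R) w D) (Ideal.span {g}) ≤ weightIdeal w 1 := fun _ hh =>
  by_contra fun hh1 => hg (mem_weightIdeal_of_mul_mem hh1 (Ideal.mem_colon_span_singleton.1 hh))

lemma colon_monomial_eq_weightIdeal_one [IsDomain R] {D : ℕ} {b : σ →₀ ℕ}
    (hlt : weight w b < D) (hgap : ∀ c : σ →₀ ℕ, 0 < weight w c → D ≤ weight w c + weight w b) :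
    Submodule.colon (weightIdeal (R := R) w D) (Ideal.span {monomial b (1 : R)}) =
      weightIdeal w 1 := by
  refine le_antisymm (colon_le_weightIdeal_one fun hb => ?_) ?_
  · have := mem_weightIdeal_iff.1 hb b (by classical simp [coeff_monomial])
    omega
  · rw [weightIdeal, Ideal.span_le]
    rintro _ ⟨c, hc, rfl⟩
    rw [SetLike.mem_coe, Ideal.mem_colon_span_singleton, monomial_mul, mul_one]
    exact Ideal.subset_span ⟨c + b, by simpa using hgap c hc, rfl⟩

end WeightIdeal

section AssociatedPrimes

variable {R : Type*} [CommRing R] {J P : Ideal R}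

lemma colon_bot_mk (J : Ideal R) (g : R) :
    Submodule.colon (⊥ : Submodule R (R ⧸ J)) {Ideal.Quotient.mk J g} =
      Submodule.colon J (Ideal.span {g}) := by
  ext r
  rw [Submodule.mem_colon_singleton, Submodule.mem_bot, Ideal.mem_colon_span_singleton]
  exact Ideal.Quotient.eq_zero_iff_mem

lemma eq_of_mem_associatedPrimes_quotient (hP : P.IsPrime)
    (hcolon : ∀ g ∉ J, Submodule.colon J (Ideal.span {g}) ≤ P) (hrad : P ≤ J.radical)
    {Q : Ideal R} (hQ : Q ∈ associatedPrimes R (R ⧸ J)) : Q = P := by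
  obtain ⟨hQprime, x, hx⟩ := hQ
  obtain ⟨g, rfl⟩ := Ideal.Quotient.mk_surjective x
  rw [colon_bot_mk] at hx
  have hg : g ∉ J := fun hg => hQprime.ne_top <| by
    rw [hx, (Ideal.eq_top_iff_one _).2 (Ideal.mem_colon_span_singleton.2 (by simpa using hg)),
      Ideal.radical_top]
  refine le_antisymm (hx ▸ hP.radical ▸ Ideal.radical_mono (hcolon g hg)) ?_
  refine hrad.trans (hx ▸ Ideal.radical_mono fun r hr => ?_)
  exact Ideal.mem_colon_span_singleton.2 (J.mul_mem_right g hr)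

lemma mem_associatedPrimes_quotient_of_colon_eq (hP : P.IsPrime) {f : R}
    (hf : Submodule.colon J (Ideal.span {f}) = P) : P ∈ associatedPrimes R (R ⧸ J) :=
  ⟨hP, Ideal.Quotient.mk J f, by rw [colon_bot_mk, hf, hP.radical]⟩

lemma vnumber_eq_sInf_of_colon_le {K σ : Type*} [Field K] {J P : Ideal (MvPolynomial σ K)}
    (hP : P.IsPrime) (hcolon : ∀ g ∉ J, Submodule.colon J (Ideal.span {g}) ≤ P)
    (hrad : P ≤ J.radical) :
    vnumber J = sInf {d | ∃ f : MvPolynomial σ K, f.IsHomogeneous d ∧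
      Submodule.colon J (Ideal.span {f}) = P} := by
  unfold vnumber
  congr 1
  ext d
  refine exists_congr fun f => and_congr_right fun _ => ?_
  exact ⟨eq_of_mem_associatedPrimes_quotient hP hcolon hrad,
    fun hf => hf ▸ mem_associatedPrimes_quotient_of_colon_eq hP hf⟩

end AssociatedPrimes

section IntClosureMonomial

open Finsupp (weight weight_apply)

variable {R σ ι : Type*} [CommRing R] {i : ι → σ} {a u : ι → ℕ} {A : ℕ}

lemma X_pow_mem_span_X_pow_pow (hi : Function.Injective i) (hu : ∀ l, a l * u l = A)
    (s : σ) (m : ℕ) :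
    (X s : MvPolynomial σ R) ^ (A * m) ∈
      Ideal.span (Set.range fun l => (X (i l) : MvPolynomial σ R) ^ a l) ^
        (m * Function.extend i u 0 s) := by
  by_cases hs : ∃ l, i l = s
  · obtain ⟨l, rfl⟩ := hs
    rw [hi.extend_apply, ← hu l, mul_assoc, mul_comm m, pow_mul (X (i l))]
    exact Ideal.pow_mem_pow (Ideal.subset_span (Set.mem_range_self l)) _
  · simp [Function.extend_apply' _ _ _ hs]

lemma span_X_pow_le_weightIdeal (hi : Function.Injective i) (hu : ∀ l, a l * u l = A) :
    Ideal.span (Set.range fun l => (X (i l) : MvPolynomial σ R) ^ a l) ≤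
      weightIdeal (Function.extend i u 0) A := by
  refine Ideal.span_le.2 ?_
  rintro _ ⟨l, rfl⟩
  dsimp only
  rw [X_pow_eq_monomial]
  exact Ideal.subset_span ⟨_, by simp [Finsupp.weight_single, hi.extend_apply, hu], rfl⟩

lemma weightIdeal_le_intClosure (hi : Function.Injective i) (hu : ∀ l, a l * u l = A)
    (hA : 0 < A) (n : ℕ) :
    weightIdeal (Function.extend i u 0) (n * A) ≤
      intClosure (Ideal.span (Set.range fun l => (X (i l) : MvPolynomial σ R) ^ a l) ^ n) := by
  refine Ideal.span_le.2 ?_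
  rintro _ ⟨b, hb, rfl⟩
  refine mem_intClosure_of_pow_mem hA ?_
  dsimp only
  rw [← pow_mul, ← prod_X_pow_eq_monomial, ← Finset.prod_pow]
  refine Ideal.pow_le_pow_right hb ?_
  rw [weight_apply, Finsupp.sum, ← Finset.prod_pow_eq_pow_sum]
  refine Ideal.prod_mem_prod fun s _ => ?_
  rw [← pow_mul, mul_comm, smul_eq_mul]
  exact X_pow_mem_span_X_pow_pow hi hu s (b s)

theorem intClosure_span_X_pow_pow [IsDomain R] (hi : Function.Injective i)
    (hu : ∀ l, a l * u l = A) (hA : 0 < A) (n : ℕ) :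
    intClosure (Ideal.span (Set.range fun l => (X (i l) : MvPolynomial σ R) ^ a l) ^ n) =
      weightIdeal (Function.extend i u 0) (n * A) := by
  refine le_antisymm ?_ (weightIdeal_le_intClosure hi hu hA n)
  calc _ ≤ intClosure (weightIdeal (Function.extend i u 0) (n * A)) :=
        intClosure_mono ((Ideal.pow_right_mono (span_X_pow_le_weightIdeal hi hu) n).trans
          (weightIdeal_pow_le A n))
    _ ≤ _ := intClosure_weightIdeal_le _

end IntClosureMonomial

section TwoWeights

open Finsupp (weight)

variable {σ : Type*} {w : σ → ℕ} {p q : ℕ}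

lemma exists_weight_eq_of_forall_eq (hw : ∀ s, w s = 0 ∨ w s = p ∨ w s = q) (b : σ →₀ ℕ) :
    ∃ x y, x + y ≤ b.degree ∧ weight w b = x * p + y * q := by
  induction b using Finsupp.induction with
  | zero => exact ⟨0, 0, by simp⟩
  | single_add s m b _ _ ih =>
    obtain ⟨x, y, hxy, hb⟩ := ih
    rw [map_add, map_add, Finsupp.degree_single, Finsupp.weight_single, smul_eq_mul, hb]
    rcases hw s with h | h | h <;> rw [h]
    · exact ⟨x, y, by omega, by ring⟩
    · exact ⟨x + m, y, by omega, by ring⟩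
    · exact ⟨x, y + m, by omega, by ring⟩

lemma le_weight_of_pos (hw : ∀ s, w s = 0 ∨ w s = p ∨ w s = q) (hqp : q ≤ p) {c : σ →₀ ℕ}
    (hc : 0 < weight w c) : q ≤ weight w c := by
  obtain ⟨x, y, -, hxy⟩ := exists_weight_eq_of_forall_eq hw c
  rw [hxy] at hc ⊢
  rcases Nat.eq_zero_or_pos x with rfl | hx
  · rcases Nat.eq_zero_or_pos y with rfl | hy
    · simp at hc
    · nlinarith
  · nlinarith

lemma add_le_add_of_weight_bounds {n e x y : ℕ} (hqp : q ≤ p) (he : e * q < p + q)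
    (hlt : x * p + y * q < n * (q * p)) (hle : n * (q * p) ≤ x * p + y * q + q) :
    n * q + e ≤ x + y + 2 := by
  have hx : x < n * q := by
    by_contra! h
    nlinarith [Nat.mul_le_mul_right p h]
  obtain ⟨s, hs⟩ := Nat.exists_eq_add_of_lt hx
  have hsp : (s + 1) * p ≤ (y + 1) * q := by nlinarith
  have : (e + s) * q < (y + 2) * q := by nlinarith
  have := Nat.lt_of_mul_lt_mul_right this
  omega

variable {K : Type*} [Field K]

lemma colon_monomial_eq_weightIdeal_one_of_two_weights (hqp : q ≤ p)
    (hw : ∀ s, w s = 0 ∨ w s = p ∨ w s = q) {s₁ s₂ : σ} (h₁ : w s₁ = p) (h₂ : w s₂ = q)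
    {N e : ℕ} (he : p ≤ (e + 1) * q) (he' : e * q < p) :
    Submodule.colon (weightIdeal (R := K) w ((N + 1) * p))
        (Ideal.span {monomial (Finsupp.single s₁ N + Finsupp.single s₂ e) (1 : K)}) =
      weightIdeal w 1 := by
  have hb : weight w (Finsupp.single s₁ N + Finsupp.single s₂ e) = N * p + e * q := by
    simp [Finsupp.weight_single, h₁, h₂]
  refine colon_monomial_eq_weightIdeal_one (by rw [hb]; nlinarith) fun c hc => ?_
  have := le_weight_of_pos hw hqp hc
  rw [hb]
  nlinarith

lemma add_le_of_colon_eq_weightIdeal_one (hq : 0 < q) (hqp : q ≤ p)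
    (hw : ∀ s, w s = 0 ∨ w s = p ∨ w s = q) {s : σ} (hs : w s = q) {n e d : ℕ}
    (he : e * q < p + q) {f : MvPolynomial σ K} (hf : f.IsHomogeneous d)
    (hcolon : Submodule.colon (weightIdeal (R := K) w (n * (q * p))) (Ideal.span {f}) =
      weightIdeal w 1) :
    n * q + e ≤ d + 2 := by
  have hfD : f ∉ weightIdeal w (n * (q * p)) := fun hfD => weightIdeal_one_isPrime.ne_top <| by
    rw [← hcolon, Ideal.eq_top_iff_one, Ideal.mem_colon_span_singleton, one_mul]
    exact hfD
  have hX : X s * f ∈ weightIdeal w (n * (q * p)) := by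
    refine Ideal.mem_colon_span_singleton.1 (hcolon ▸ Ideal.subset_span ⟨_, ?_, rfl⟩)
    simp only [Set.mem_ofPred_eq, Finsupp.weight_single, hs, smul_eq_mul, one_mul]
    exact hq
  obtain ⟨b, hb, hlt, hle⟩ := exists_mem_support_of_X_mul_mem hfD hX
  obtain ⟨x, y, hxy, hwb⟩ := exists_weight_eq_of_forall_eq hw b
  have hdeg : b.degree = d := by
    rw [Finsupp.degree_eq_weight_one]
    exact hf (mem_support_iff.1 hb)
  rw [hs, hwb] at hle
  rw [hwb] at hlt
  have := add_le_add_of_weight_bounds hqp he hlt hle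
  omega

theorem vnumber_weightIdeal_of_two_weights (hq : 0 < q) (hqp : q ≤ p)
    (hw : ∀ s, w s = 0 ∨ w s = p ∨ w s = q) {s₁ s₂ : σ} (h₁ : w s₁ = p) (h₂ : w s₂ = q)
    {n e : ℕ} (hn : 0 < n) (he : p ≤ e * q) (he' : e * q < p + q) :
    vnumber (weightIdeal (R := K) w (n * (q * p))) + 2 = n * q + e := by
  rw [vnumber_eq_sInf_of_colon_le weightIdeal_one_isPrime (fun _ => colon_le_weightIdeal_one)
    (weightIdeal_one_le_radical _)]
  obtain ⟨N, hN⟩ := Nat.exists_eq_add_one_of_ne_zero (Nat.mul_pos hn hq).ne'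
  obtain ⟨e', rfl⟩ := Nat.exists_eq_add_one_of_ne_zero (by rintro rfl; omega : e ≠ 0)
  have hD : n * (q * p) = (N + 1) * p := by rw [← hN, mul_assoc]
  -- the minimum is attained at `x_{s₁} ^ (n q - 1) * x_{s₂} ^ (e - 1)`
  have hleast : IsLeast {d | ∃ f : MvPolynomial σ K, f.IsHomogeneous d ∧
      Submodule.colon (weightIdeal (R := K) w (n * (q * p))) (Ideal.span {f}) = weightIdeal w 1}
      (N + e') := by
    refine ⟨⟨_, isHomogeneous_monomial _ (by simp), hD ▸
      colon_monomial_eq_weightIdeal_one_of_two_weights hqp hw h₁ h₂ he (by linarith)⟩, ?_⟩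
    rintro d ⟨f, hf, hcolon⟩
    have := add_le_of_colon_eq_weightIdeal_one hq hqp hw h₂ he' hf hcolon
    omega
  rw [hleast.csInf_eq]
  omega

end TwoWeights

lemma ceil_div_mul_bounds {p q : ℕ} (hq : 0 < q) :
    p ≤ ⌈(p : ℚ) / q⌉₊ * q ∧ ⌈(p : ℚ) / q⌉₊ * q < p + q := by
  have hq' : (0 : ℚ) < q := by exact_mod_cast hq
  have hle := Nat.le_ceil ((p : ℚ) / q)
  have hlt := Nat.ceil_lt_add_one (R := ℚ) (a := p / q) (by positivity)
  rw [div_le_iff₀ hq'] at hle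
  rw [← sub_lt_iff_lt_add, lt_div_iff₀ hq'] at hlt
  constructor
  · exact_mod_cast hle
  · exact_mod_cast (by linarith : (⌈(p : ℚ) / q⌉₊ : ℚ) * q < p + q)

lemma extend_ite_eq_or {ι σ : Type*} {i : ι → σ} (hi : Function.Injective i) (P : ι → Prop)
    [DecidablePred P] (p q : ℕ) (s : σ) :
    Function.extend i (fun l => if P l then p else q) 0 s = 0 ∨
      Function.extend i (fun l => if P l then p else q) 0 s = p ∨
      Function.extend i (fun l => if P l then p else q) 0 s = q := by
  by_cases hs : ∃ l, i l = s
  · obtain ⟨l, rfl⟩ := hs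
    rw [hi.extend_apply]
    split_ifs <;> simp
  · simp [Function.extend_apply' _ _ _ hs]

theorem vnumber_intClosure_pow_two_blocks_general
    {K : Type*} [Field K] {σ : Type*} (k' : ℕ) (i : Fin (k' + 2) → σ)
    (hi : Function.Injective i)
    (a : Fin (k' + 2) → ℕ) (ha1 : 1 ≤ a 0) (hmono : Monotone a)
    (j : Fin (k' + 2))
    (hblock1 : ∀ p : Fin (k' + 2), (p : ℕ) < (j : ℕ) → a p = a 0)
    (hblock2 : ∀ p : Fin (k' + 2), (j : ℕ) ≤ (p : ℕ) → a p = a (Fin.last (k' + 1)))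
    (I : Ideal (MvPolynomial σ K))
    (hI : I = Ideal.span (Set.range fun p => (X (i p) : MvPolynomial σ K) ^ a p))
    (n : ℕ) (hn : 1 ≤ n) :
    (vnumber (intClosure (I ^ n)) : ℤ)
      = (n : ℤ) * a 0 + ⌈(a (Fin.last (k' + 1)) : ℚ) / (a 0 : ℚ)⌉ - 2 := by
  subst hI
  set a₀ := a 0
  set aₖ := a (Fin.last (k' + 1))
  have ha₀ₖ : a₀ ≤ aₖ := hmono (Fin.zero_le _)
  have hak : 0 < aₖ := ha1.trans ha₀ₖ
  -- `x_{i l}` gets weight `a₀ aₖ / a l`, so the closure is cut out by weight `n a₀ aₖ`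
  set u : Fin (k' + 2) → ℕ := fun l => if l < j then aₖ else a₀
  have hu : ∀ l, a l * u l = a₀ * aₖ := fun l => by
    by_cases h : l < j
    · simp only [u, if_pos h, hblock1 l h]
    · simp only [u, if_neg h, hblock2 l (not_lt.1 h), mul_comm]
  have h₁ : Function.extend i u 0 (i 0) = aₖ :=
    (hi.extend_apply _ _ _).trans (Nat.eq_of_mul_eq_mul_left ha1 (hu 0))
  have h₂ : Function.extend i u 0 (i (Fin.last (k' + 1))) = a₀ :=
    (hi.extend_apply _ _ _).trans <| Nat.eq_of_mul_eq_mul_left hak ((hu _).trans (mul_comm _ _))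
  obtain ⟨he, he'⟩ := ceil_div_mul_bounds (p := aₖ) ha1
  have : vnumber (weightIdeal (R := K) (Function.extend i u 0) (n * (a₀ * aₖ))) + 2 =
      n * a₀ + ⌈(aₖ : ℚ) / a₀⌉₊ :=
    vnumber_weightIdeal_of_two_weights ha1 ha₀ₖ (extend_ite_eq_or hi _ aₖ a₀) h₁ h₂ hn he he'
  rw [intClosure_span_X_pow_pow hi hu (Nat.mul_pos ha1 hak),
    ← Int.natCast_ceil_eq_ceil (by positivity)]
  omega

/-- If `I = ⟨x_{i_1}^{a_1},…,x_{i_k}^{a_k}⟩` with `1 ≤ a_1 ≤ ⋯ ≤ a_k`, `k ≥ 2`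
(here `k = k'+2`), and there is `j ≥ 2` with `a_1 = ⋯ = a_{j−1} ≤ a_j = ⋯ = a_k`
(0-indexed: all entries below `j` equal `a 0` and all entries from `j` on equal the last one),
then `v(closure(I^n)) = n·a_1 + ⌈a_k/a_1⌉ − 2` for all `n ≥ 1`. -/
theorem vnumber_intClosure_pow_two_blocks
    {K : Type*} [Field K] {σ : Type*} (k' : ℕ) (i : Fin (k' + 2) → σ)
    (hi : Function.Injective i)
    (a : Fin (k' + 2) → ℕ) (ha1 : 1 ≤ a 0) (hmono : Monotone a)
    (j : Fin (k' + 2)) (hj : 1 ≤ (j : ℕ))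
    (hblock1 : ∀ p : Fin (k' + 2), (p : ℕ) < (j : ℕ) → a p = a 0)
    (hblock2 : ∀ p : Fin (k' + 2), (j : ℕ) ≤ (p : ℕ) → a p = a (Fin.last (k' + 1)))
    (I : Ideal (MvPolynomial σ K))
    (hI : I = Ideal.span (Set.range fun p => (X (i p) : MvPolynomial σ K) ^ a p))
    (n : ℕ) (hn : 1 ≤ n) :
    (vnumber (intClosure (I ^ n)) : ℤ)
      = (n : ℤ) * a 0 + ⌈(a (Fin.last (k' + 1)) : ℚ) / (a 0 : ℚ)⌉ - 2 :=
  vnumber_intClosure_pow_two_blocks_general k' i hi a ha1 hmono j hblock1 hblock2 I hI n hn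
end

section
/- Let I = ⟨x_{i_1}^{a_1}, x_{i_2}^{a_2}, x_{i_3}^{a_3}⟩ with 1 ≤ a_1 ≤ a_2 ≤ a_3, let P = ⟨x_{i_1}, x_{i_2}, x_{i_3}⟩, and for 1 ≤ m ≤ a_1 define f_m = x_{i_1}^{a_1−m} · x_{i_2}^{⌈m a_2/a_1⌉−1} · x_{i_3}^{⌈(a_3/a_2)(m a_2/a_1 − ⌈m a_2/a_1⌉ + 1)⌉−1}. Then (\overline{I} : f_m) = P for all 1 ≤ m ≤ a_1. -/
/-!
Give `x_{i_j}` the weight `N / a_j`, where `N = a₁a₂a₃`, and every other variable weight `0`.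
The least weight of a monomial of a polynomial is an additive valuation (over a domain the
lowest-weight forms multiply), and each generator of `I` has weight `N`; an equation of integral
dependence over `I` then forces every element of `closure(I)` to have weighted order `≥ N`.
Conversely, a monomial of weight `≥ N` has its `N`-th power in `I^N`, so lies in `closure(I)`.
The exponents of `f_m` are chosen so that `f_m` has weight `< N` while `x_{i_j} f_m` has weight
`≥ N` for `j = 1, 2, 3`; and a polynomial outside `P` has a monomial of weight `0`.
-/

open MvPolynomial Ideal

/-- `⌈m a₂ / a₁⌉ − 1`, the exponent of the second variable in `f_m`. -/
noncomputable def expTwo (a1 a2 m : ℕ) : ℕ := (⌈((m : ℚ) * a2) / a1⌉ - 1).toNat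

/-- `⌈(a₃/a₂)(m a₂/a₁ − ⌈m a₂/a₁⌉ + 1)⌉ − 1`, the exponent of the third variable in `f_m`. -/
noncomputable def expThree (a1 a2 a3 m : ℕ) : ℕ :=
  (⌈((a3 : ℚ) / a2) * (((m : ℚ) * a2) / a1 - ⌈((m : ℚ) * a2) / a1⌉ + 1)⌉ - 1).toNat

/-- The exponent vector of the monomial
`f_m = x_{i_1}^{a_1−m} x_{i_2}^{⌈m a₂/a₁⌉−1} x_{i_3}^{⌈(a₃/a₂)(m a₂/a₁−⌈m a₂/a₁⌉+1)⌉−1}`. -/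
noncomputable def fExp {σ : Type*} (i1 i2 i3 : σ) (a1 a2 a3 m : ℕ) : σ →₀ ℕ :=
  Finsupp.single i1 (a1 - m) + Finsupp.single i2 (expTwo a1 a2 m)
    + Finsupp.single i3 (expThree a1 a2 a3 m)

namespace AddValuation

variable {R : Type*} [CommRing R] (v : AddValuation R ℕ∞)

def geIdeal (n : ℕ∞) : Ideal R where
  carrier := {x | n ≤ v x}
  add_mem' hx hy := (le_min hx hy).trans (v.map_add _ _)
  zero_mem' := by simp
  smul_mem' c x hx := by
    simp only [Set.mem_ofPred_eq, smul_eq_mul, v.map_mul]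
    exact le_add_left hx

theorem mem_geIdeal {n : ℕ∞} {x : R} : x ∈ v.geIdeal n ↔ n ≤ v x := Iff.rfl

theorem geIdeal_mul_le (m n : ℕ∞) : v.geIdeal m * v.geIdeal n ≤ v.geIdeal (m + n) :=
  Ideal.mul_le.2 fun _ hx _ hy => by
    rw [mem_geIdeal, v.map_mul]
    exact add_le_add hx hy

theorem pow_le_geIdeal {I : Ideal R} {n : ℕ∞} (h : I ≤ v.geIdeal n) (i : ℕ) :
    I ^ i ≤ v.geIdeal (i • n) := by
  induction i with
  | zero => exact fun x _ => by simp [mem_geIdeal]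
  | succ i ih =>
    rw [pow_succ, succ_nsmul]
    exact (Ideal.mul_mono ih h).trans (v.geIdeal_mul_le _ _)

theorem le_of_integral_dependence {x : R} {n N : ℕ} {c : ℕ → R}
    (hc : ∀ i ∈ Finset.Icc 1 n, c i ∈ v.geIdeal (i • N))
    (heq : x ^ n + ∑ i ∈ Finset.Icc 1 n, c i * x ^ (n - i) = 0) : (N : ℕ∞) ≤ v x := by
  by_contra! hlt
  obtain ⟨k, hk⟩ := ENat.ne_top_iff_exists.1 (hlt.trans_le le_top).ne
  rw [← hk, Nat.cast_lt] at hlt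
  have hterm : ∀ i ∈ Finset.Icc 1 n, ((n * k : ℕ) : ℕ∞) < v (c i * x ^ (n - i)) := by
    intro i hi
    obtain ⟨hi1, hin⟩ := Finset.mem_Icc.1 hi
    have hsplit : n * k = i * k + (n - i) * k := by rw [← add_mul, Nat.add_sub_cancel' hin]
    have hik : i * k < i * N := Nat.mul_lt_mul_of_pos_left hlt hi1
    calc ((n * k : ℕ) : ℕ∞) < ((i * N + (n - i) * k : ℕ) : ℕ∞) := by
          exact_mod_cast (by omega : n * k < i * N + (n - i) * k)
      _ ≤ v (c i) + v (x ^ (n - i)) := by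
          rw [Nat.cast_add, v.map_pow, ← hk]
          gcongr
          · simpa [mem_geIdeal] using hc i hi
          · simp [nsmul_eq_mul]
      _ = v (c i * x ^ (n - i)) := (v.map_mul _ _).symm
  have hlow := v.map_lt_sum (ENat.natCast_ne_top _) hterm
  rw [← v.map_neg, ← eq_neg_of_add_eq_zero_left heq, v.map_pow, ← hk] at hlow
  simp at hlow

theorem intClosure_le_geIdeal {I : Ideal R} {N : ℕ} (h : I ≤ v.geIdeal N) :
    intClosure I ≤ v.geIdeal N :=
  Ideal.span_le.2 fun _ ⟨_, _, _, hc, heq⟩ =>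
    v.le_of_integral_dependence (fun i hi => v.pow_le_geIdeal h i (hc i hi)) heq

end AddValuation

namespace MvPolynomial

variable {σ R : Type*} [CommRing R] [IsDomain R] (w : σ → ℕ)

noncomputable def weightedOrderValuation : AddValuation (MvPolynomial σ R) ℕ∞ :=
  AddValuation.of (fun f => (f : MvPowerSeries σ R).weightedOrder w)
    (by simp) (by simp)
    (fun f g => by simpa only [coe_add] using MvPowerSeries.min_weightedOrder_le_add w)
    (fun f g => by simpa only [coe_mul] using MvPowerSeries.weightedOrder_mul w _ _)

theorem weightedOrderValuation_apply (f : MvPolynomial σ R) :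
    weightedOrderValuation w f = (f : MvPowerSeries σ R).weightedOrder w := rfl

theorem weightedOrderValuation_X (j : σ) :
    weightedOrderValuation w (X j : MvPolynomial σ R) = w j := by
  rw [weightedOrderValuation_apply, coe_X, MvPowerSeries.X,
    MvPowerSeries.weightedOrder_monomial_of_ne_zero w one_ne_zero, Finsupp.weight_single, one_smul]

theorem weightedOrderValuation_eq_zero_of_notMem_span {s : Set σ} (hw : ∀ j ∉ s, w j = 0)
    {f : MvPolynomial σ R} (hf : f ∉ Ideal.span (X '' s)) : weightedOrderValuation w f = 0 := by
  obtain ⟨d, hd, hds⟩ : ∃ d ∈ f.support, ∀ i ∈ s, d i = 0 := by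
    simpa [mem_ideal_span_X_image] using hf
  have hweight : Finsupp.weight w d = 0 := by
    rw [Finsupp.weight_apply, Finsupp.sum]
    refine Finset.sum_eq_zero fun j _ => ?_
    by_cases hj : j ∈ s
    · simp [hds j hj]
    · simp [hw j hj]
  refine nonpos_iff_eq_zero.1 ?_
  rw [weightedOrderValuation_apply, ← Nat.cast_zero, ← hweight]
  exact MvPowerSeries.weightedOrder_le w (by simpa [coeff_coe] using hd)

end MvPolynomial

theorem mem_intClosure_of_pow_mem_pow {R : Type*} [CommRing R] {I : Ideal R} {x : R} {n : ℕ}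
    (hn : 0 < n) (h : x ^ n ∈ I ^ n) : x ∈ intClosure I := by
  classical
  refine Ideal.subset_span ⟨n, hn, Pi.single n (-x ^ n), fun i _ => ?_, ?_⟩
  · by_cases hi : i = n
    · subst hi; simpa using neg_mem h
    · simp [hi]
  · rw [Finset.sum_eq_single_of_mem n (Finset.mem_Icc.2 ⟨hn, le_rfl⟩) fun i _ hi => by simp [hi]]
    simp

theorem pow_mul_pow_mul_pow_mem_intClosure {R : Type*} [CommRing R] (x y z : R)
    {a1 a2 a3 : ℕ} (hN : 0 < a1 * a2 * a3) {b1 b2 b3 : ℕ}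
    (hb : a1 * a2 * a3 ≤ b1 * (a2 * a3) + b2 * (a1 * a3) + b3 * (a1 * a2)) :
    x ^ b1 * y ^ b2 * z ^ b3 ∈ intClosure (Ideal.span {x ^ a1, y ^ a2, z ^ a3}) := by
  refine mem_intClosure_of_pow_mem_pow hN (Ideal.pow_le_pow_right hb ?_)
  have hpow : (x ^ b1 * y ^ b2 * z ^ b3) ^ (a1 * a2 * a3) =
      (x ^ a1) ^ (b1 * (a2 * a3)) * (y ^ a2) ^ (b2 * (a1 * a3)) * (z ^ a3) ^ (b3 * (a1 * a2)) := by
    ring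
  rw [hpow, pow_add, pow_add]
  refine Ideal.mul_mem_mul (Ideal.mul_mem_mul ?_ ?_) ?_ <;>
    exact Ideal.pow_mem_pow (Ideal.subset_span (by simp)) _

section Exponents

variable {a1 a2 a3 m : ℕ}

theorem cast_expTwo (ha1 : 0 < a1) (ha2 : 0 < a2) (hm : 0 < m) :
    (expTwo a1 a2 m : ℚ) = ⌈(m : ℚ) * a2 / a1⌉ - 1 := by
  have hc : 0 < ⌈(m : ℚ) * a2 / a1⌉ := Int.ceil_pos.2 (by positivity)
  rw [expTwo, ← Int.cast_natCast, Int.toNat_of_nonneg (by omega)]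
  push_cast; ring

theorem cast_expThree (ha2 : 0 < a2) (ha3 : 0 < a3) :
    (expThree a1 a2 a3 m : ℚ) =
      ⌈(a3 : ℚ) / a2 * ((m : ℚ) * a2 / a1 - ⌈(m : ℚ) * a2 / a1⌉ + 1)⌉ - 1 := by
  have hfrac : 0 < (m : ℚ) * a2 / a1 - ⌈(m : ℚ) * a2 / a1⌉ + 1 := by
    linarith [Int.ceil_lt_add_one ((m : ℚ) * a2 / a1)]
  have hc : 0 < ⌈(a3 : ℚ) / a2 * ((m : ℚ) * a2 / a1 - ⌈(m : ℚ) * a2 / a1⌉ + 1)⌉ :=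
    Int.ceil_pos.2 (by positivity)
  rw [expThree, ← Int.cast_natCast, Int.toNat_of_nonneg (by omega)]
  push_cast; ring

theorem fExp_weight_bounds (ha1 : 1 ≤ a1) (h12 : a1 ≤ a2) (h23 : a2 ≤ a3)
    (hm1 : 1 ≤ m) (hm2 : m ≤ a1) :
    (a1 - m) * (a2 * a3) + expTwo a1 a2 m * (a1 * a3) + expThree a1 a2 a3 m * (a1 * a2)
        < a1 * a2 * a3 ∧
    a1 * a2 * a3 ≤ (a1 - m + 1) * (a2 * a3) + expTwo a1 a2 m * (a1 * a3)
        + expThree a1 a2 a3 m * (a1 * a2) ∧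
    a1 * a2 * a3 ≤ (a1 - m) * (a2 * a3) + (expTwo a1 a2 m + 1) * (a1 * a3)
        + expThree a1 a2 a3 m * (a1 * a2) ∧
    a1 * a2 * a3 ≤ (a1 - m) * (a2 * a3) + expTwo a1 a2 m * (a1 * a3)
        + (expThree a1 a2 a3 m + 1) * (a1 * a2) := by
  have ha2 : 0 < a2 := by omega
  have ha3 : 0 < a3 := by omega
  have hE2 := cast_expTwo (a1 := a1) (by omega) ha2 (by omega : 0 < m)
  have hE3 := cast_expThree (a1 := a1) (m := m) ha2 ha3
  set t : ℚ := (m : ℚ) * a2 / a1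
  set c : ℤ := ⌈t⌉
  set y : ℚ := (a3 : ℚ) / a2 * (t - c + 1)
  set u : ℤ := ⌈y⌉
  have hA1 : (0 : ℚ) < a1 := by exact_mod_cast ha1
  have hA2 : (0 : ℚ) < a2 := by exact_mod_cast ha2
  have hA3 : (0 : ℚ) < a3 := by exact_mod_cast ha3
  have hA12 : (a1 : ℚ) ≤ a2 := by exact_mod_cast h12
  have ht : t * a1 = m * a2 := div_mul_cancel₀ _ hA1.ne'
  have hy : y * a2 = a3 * (t - c + 1) := by simp only [y]; field_simp
  have hct : t ≤ c := Int.le_ceil t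
  have hc : (c : ℚ) < t + 1 := Int.ceil_lt_add_one t
  have hyu : y ≤ u := Int.le_ceil y
  have hu : (u : ℚ) < y + 1 := Int.ceil_lt_add_one y
  have hu1 : (1 : ℚ) ≤ u := by
    exact_mod_cast Int.one_le_ceil_iff.2 (mul_pos (div_pos hA3 hA2) (by linarith))
  clear_value t c y u
  -- In units of `a1 a2 a3`, the weight of `f_m` is `1 + (u - 1 - y) / a3`.
  have hW : ((a1 : ℚ) - m) * (a2 * a3) + (c - 1) * (a1 * a3) + (u - 1) * (a1 * a2) =
      a1 * a2 * a3 + a1 * a2 * (u - 1 - y) := by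
    linear_combination (a1 : ℚ) * hy + (a3 : ℚ) * ht
  have hy' : a1 * a2 * y = a1 * a3 * (t - c + 1) := by linear_combination (a1 : ℚ) * hy
  have hA : (0 : ℚ) < a1 * a2 := by positivity
  have hB : (0 : ℚ) < a1 * a3 := by positivity
  refine ⟨?_, ?_, ?_, ?_⟩ <;> qify [hm2] <;> rw [hE2, hE3]
  · linarith [mul_lt_mul_of_pos_left (by linarith : (u : ℚ) - 1 - y < 0) hA]
  · linarith [mul_le_mul_of_nonneg_left (by linarith : (u : ℚ) - 1 ≥ 0) hA.le,
      mul_le_mul_of_nonneg_left (by linarith : t - c + 1 ≤ 1) hB.le,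
      mul_le_mul_of_nonneg_right hA12 hA3.le]
  · linarith [mul_le_mul_of_nonneg_left (by linarith : (u : ℚ) - 1 ≥ 0) hA.le,
      mul_le_mul_of_nonneg_left hct hB.le]
  · linarith [mul_le_mul_of_nonneg_left hyu hA.le]

section TriWeight

variable {σ : Type*} (i1 i2 i3 : σ) (a1 a2 a3 : ℕ)

noncomputable def triWeight : σ → ℕ :=
  ⇑(Finsupp.single i1 (a2 * a3) + Finsupp.single i2 (a1 * a3) + Finsupp.single i3 (a1 * a2))

variable {i1 i2 i3}

theorem triWeight_eq_zero {j : σ} (hj : j ∉ ({i1, i2, i3} : Set σ)) :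
    triWeight i1 i2 i3 a1 a2 a3 j = 0 := by
  simp only [Set.mem_insert_iff, Set.mem_singleton_iff, not_or] at hj
  simp [triWeight, Ne.symm hj.1, Ne.symm hj.2.1, Ne.symm hj.2.2]

variable (h12 : i1 ≠ i2) (h13 : i1 ≠ i3) (h23 : i2 ≠ i3)
variable {K : Type*} [CommRing K] [IsDomain K]

include h12 h13 in
theorem triWeight_first : triWeight i1 i2 i3 a1 a2 a3 i1 = a2 * a3 := by
  simp [triWeight, h12, h13]

include h12 h23 in
theorem triWeight_second : triWeight i1 i2 i3 a1 a2 a3 i2 = a1 * a3 := by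
  simp [triWeight, Ne.symm h12, h23]

include h13 h23 in
theorem triWeight_third : triWeight i1 i2 i3 a1 a2 a3 i3 = a1 * a2 := by
  simp [triWeight, Ne.symm h13, Ne.symm h23]

include h12 h13 h23 in
theorem weightedOrderValuation_triWeight_X_pow (e1 e2 e3 : ℕ) :
    weightedOrderValuation (triWeight i1 i2 i3 a1 a2 a3)
        (X i1 ^ e1 * X i2 ^ e2 * X i3 ^ e3 : MvPolynomial σ K) =
      ((e1 * (a2 * a3) + e2 * (a1 * a3) + e3 * (a1 * a2) : ℕ) : ℕ∞) := by
  simp only [AddValuation.map_mul, AddValuation.map_pow, weightedOrderValuation_X,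
    triWeight_first a1 a2 a3 h12 h13, triWeight_second a1 a2 a3 h12 h23,
    triWeight_third a1 a2 a3 h13 h23, nsmul_eq_mul]
  push_cast; ring

include h12 h13 h23 in
theorem span_X_pow_le_geIdeal :
    Ideal.span {(X i1 : MvPolynomial σ K) ^ a1, X i2 ^ a2, X i3 ^ a3} ≤
      (weightedOrderValuation (triWeight i1 i2 i3 a1 a2 a3)).geIdeal (a1 * a2 * a3 : ℕ) := by
  rw [Ideal.span_le]
  rintro _ (rfl | rfl | rfl) <;>
    simp only [SetLike.mem_coe, AddValuation.mem_geIdeal, AddValuation.map_pow,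
      weightedOrderValuation_X, triWeight_first a1 a2 a3 h12 h13,
      triWeight_second a1 a2 a3 h12 h23, triWeight_third a1 a2 a3 h13 h23, nsmul_eq_mul,
      Nat.cast_mul] <;>
    exact le_of_eq (by ring)

end TriWeight

/-- For `I = ⟨x_{i_1}^{a_1}, x_{i_2}^{a_2}, x_{i_3}^{a_3}⟩` with `1 ≤ a_1 ≤ a_2 ≤ a_3` and
`P = ⟨x_{i_1}, x_{i_2}, x_{i_3}⟩`, one has `(closure(I) : f_m) = P` for `1 ≤ m ≤ a_1`. -/
theorem colon_intClosure_fm_eq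
    {K : Type*} [Field K] {σ : Type*} (i1 i2 i3 : σ)
    (h12 : i1 ≠ i2) (h13 : i1 ≠ i3) (h23 : i2 ≠ i3)
    (a1 a2 a3 : ℕ) (ha1 : 1 ≤ a1) (h12' : a1 ≤ a2) (h23' : a2 ≤ a3)
    (I : Ideal (MvPolynomial σ K))
    (hI : I = Ideal.span {(X i1 : MvPolynomial σ K) ^ a1, (X i2) ^ a2, (X i3) ^ a3})
    (P : Ideal (MvPolynomial σ K))
    (hP : P = Ideal.span {(X i1 : MvPolynomial σ K), X i2, X i3})
    (m : ℕ) (hm1 : 1 ≤ m) (hm2 : m ≤ a1) :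
    Submodule.colon (intClosure I)
      (Ideal.span {(monomial (fExp i1 i2 i3 a1 a2 a3 m) 1 : MvPolynomial σ K)}) = P := by
  subst hI hP
  obtain ⟨hlt, hle1, hle2, hle3⟩ := fExp_weight_bounds ha1 h12' h23' hm1 hm2
  have hf : (monomial (fExp i1 i2 i3 a1 a2 a3 m) 1 : MvPolynomial σ K) =
      X i1 ^ (a1 - m) * X i2 ^ expTwo a1 a2 m * X i3 ^ expThree a1 a2 a3 m := by
    simp only [fExp, X_pow_eq_monomial, monomial_mul, one_mul]
  rw [hf]
  apply le_antisymm
  · intro r hr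
    by_contra hrP
    set v := weightedOrderValuation (R := K) (triWeight i1 i2 i3 a1 a2 a3)
    have hmem := v.intClosure_le_geIdeal (span_X_pow_le_geIdeal a1 a2 a3 h12 h13 h23)
      (Ideal.mem_colon_span_singleton.1 hr)
    have hX : ({X i1, X i2, X i3} : Set (MvPolynomial σ K)) = X '' {i1, i2, i3} := by
      simp [Set.image_insert_eq]
    have hr0 : v r = 0 := weightedOrderValuation_eq_zero_of_notMem_span _
      (fun _ => triWeight_eq_zero a1 a2 a3) (hX ▸ hrP)
    rw [AddValuation.mem_geIdeal, v.map_mul, hr0, zero_add,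
      weightedOrderValuation_triWeight_X_pow a1 a2 a3 h12 h13 h23, Nat.cast_le] at hmem
    omega
  · have hN : 0 < a1 * a2 * a3 := Nat.mul_pos (Nat.mul_pos (by omega) (by omega)) (by omega)
    rw [Ideal.span_le]
    rintro _ (rfl | rfl | rfl) <;> rw [SetLike.mem_coe, Ideal.mem_colon_span_singleton]
    · convert pow_mul_pow_mul_pow_mem_intClosure _ _ _ hN hle1 using 1; ring
    · convert pow_mul_pow_mul_pow_mem_intClosure _ _ _ hN hle2 using 1; ring
    · convert pow_mul_pow_mul_pow_mem_intClosure _ _ _ hN hle3 using 1; ring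
end Exponents
end
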